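/- arXiv:1412.4904 — 5 statements merged into one kernel-verified Lean document; each statement's English description precedes it below -/
import Mathlib

section
/- For every Boolean function f : X × Y → {0,1}, the garden-hose complexity GH(f) is at most the number of edges in any deterministic communication protocol tree computing f. -/
/-- One step of the water's path in a garden-hose game: on even steps Alice's
matching (an involution on pipes together with the tap `none`) is applied,
on odd steps Bob's matching (an involution on the pipes). A fixed point of the
relevant involution means the corresponding pipe end is open (unmatched). -/
def ghStep {s : ℕ} (A : Option (Fin s) → Option (Fin s)) (B : Fin s → Fin s)
    (n : ℕ) (v : Option (Fin s)) : Option (Fin s) :=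
  if n % 2 = 0 then A v else Option.map B v

/-- Position of the water after `n` steps, starting at the tap `none`. -/
def ghWalk {s : ℕ} (A : Option (Fin s) → Option (Fin s)) (B : Fin s → Fin s) :
    ℕ → Option (Fin s)
  | 0 => none
  | n + 1 => ghStep A B n (ghWalk A B n)

/-- The length of the path starting at the tap: the first time the walk halts
(i.e. the current pipe end is open). Its parity is the output of the game. -/
noncomputable def ghLen {s : ℕ} (A : Option (Fin s) → Option (Fin s))
    (B : Fin s → Fin s) : ℕ :=
  sInf {n | ghStep A B n (ghWalk A B n) = ghWalk A B n}

/-- A garden-hose protocol with `s` pipes: Alice places, depending on her input,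
a matching (involution) on the pipes together with the tap `none`; Bob places a
matching on the pipes. -/
structure GHProtocol (X Y : Type) (s : ℕ) where
  A : X → Option (Fin s) → Option (Fin s)
  B : Y → Fin s → Fin s
  hA : ∀ x, Function.Involutive (A x)
  hB : ∀ y, Function.Involutive (B y)

/-- The protocol computes `f` if for every input the walk from the tap halts and
the parity of the path length is `f x y`. -/
def GHProtocol.Computes {X Y : Type} {s : ℕ} (P : GHProtocol X Y s)
    (f : X → Y → Bool) : Prop :=
  ∀ x y,
    {n | ghStep (P.A x) (P.B y) n (ghWalk (P.A x) (P.B y) n)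
        = ghWalk (P.A x) (P.B y) n}.Nonempty ∧
    (ghLen (P.A x) (P.B y) % 2 = 1 ↔ f x y = true)

/-- The garden-hose complexity of `f`. -/
noncomputable def GH {X Y : Type} (f : X → Y → Bool) : ℕ :=
  sInf {s | ∃ P : GHProtocol X Y s, P.Computes f}

/-- A deterministic communication protocol tree: internal nodes belong to Alice
or to Bob; a node owned by Alice is labeled by a map from `X` to its children
(an edge per possible message), similarly for Bob; leaves accept or reject. -/
inductive ProtTree (X Y : Type) where
  | leaf : Bool → ProtTree X Y
  | anode : (d : ℕ) → (X → Fin d) → (Fin d → ProtTree X Y) → ProtTree X Y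
  | bnode : (d : ℕ) → (Y → Fin d) → (Fin d → ProtTree X Y) → ProtTree X Y

/-- Following the protocol tree on input `(x, y)`. -/
def ProtTree.eval {X Y : Type} : ProtTree X Y → X → Y → Bool
  | .leaf b, _, _ => b
  | .anode _ g c, x, y => (c (g x)).eval x y
  | .bnode _ g c, x, y => (c (g y)).eval x y

/-- The number of edges of a protocol tree. -/
def ProtTree.edges {X Y : Type} : ProtTree X Y → ℕ
  | .leaf _ => 0
  | .anode d _ c => d + ∑ i : Fin d, (c i).edges
  | .bnode d _ c => d + ∑ i : Fin d, (c i).edges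

/-!
Pipes are the edges of the protocol tree. Handing the tap to the other player through one
new pipe delays every halting time by one step and so negates the output; since the walk is
reversible, the water never flows back into the tap, so the game behind the new pipe is
simulated faithfully. Every subtree is therefore realised in both orientations, with the tap
at Alice computing its value and with the tap at Bob computing the negation, on exactly as
many pipes as it has edges; the only exceptions are the leaves `true` and `false`
respectively, which are handled by their parent.

At a node owned by the tap holder, he sends the water into the edge of his message, and the
far end of that edge is the tap of the child in the other orientation. At a node owned by
the other player, the tap holder sends the water into the edge of a fixed child `jp`: the
owner either continues in `jp` or, as in the first case, enters the edge of his message.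
-/

open Function

namespace GardenHose

variable {P Q : Type}

def step (A : Option P → Option P) (B : P → P) (n : ℕ) (w : Option P) : Option P :=
  if n % 2 = 0 then A w else Option.map B w

def walk (A : Option P → Option P) (B : P → P) : ℕ → Option P
  | 0 => none
  | n + 1 => step A B n (walk A B n)

def haltTimes (A : Option P → Option P) (B : P → P) : Set ℕ :=
  {n | walk A B (n + 1) = walk A B n}

def Outputs (A : Option P → Option P) (B : P → P) (b : Bool) : Prop :=
  ∃ L, IsLeast (haltTimes A B) L ∧ L.bodd = b

section Walk

variable {A : Option P → Option P} {B : P → P}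

lemma walk_succ (n : ℕ) : walk A B (n + 1) = step A B n (walk A B n) := rfl

lemma step_involutive (hA : Involutive A) (hB : Involutive B) (n : ℕ) :
    Involutive (step A B n) := by
  intro w
  unfold step
  split_ifs
  · exact hA w
  · cases w <;> simp [hB _]

/-- Reversibility: a walk that is back at the tap at an odd time is a palindrome. -/
lemma walk_eq_of_add_eq (hA : Involutive A) (hB : Involutive B) {t : ℕ}
    (ht : walk A B (2 * t + 1) = none) : ∀ i j, i + j = 2 * t + 1 → walk A B i = walk A B j
  | 0, j, h => by rw [show j = 2 * t + 1 by omega, ht]; rfl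
  | i + 1, j, h => by
    have hsame : step A B i = step A B j := by
      ext1 w
      simp only [step, show i % 2 = j % 2 by omega]
    rw [walk_succ, walk_eq_of_add_eq hA hB ht i (j + 1) (by omega), walk_succ, hsame,
      step_involutive hA hB j]

lemma walk_ne_none (hA : Involutive A) (hB : Involutive B) {n : ℕ} (hn : 0 < n)
    (hlt : ∀ m < n, m ∉ haltTimes A B) : walk A B n ≠ none := by
  have key : ∀ t, walk A B (2 * t + 1) = none → t ∈ haltTimes A B := fun t ht =>
    walk_eq_of_add_eq hA hB ht (t + 1) t (by omega)
  intro hw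
  obtain ⟨t, rfl | rfl⟩ := Nat.even_or_odd' n
  · obtain ⟨s, rfl⟩ : ∃ s, t = s + 1 := ⟨t - 1, by omega⟩
    rw [show 2 * (s + 1) = 2 * s + 1 + 1 by ring, walk_succ, step, if_neg (by omega),
      Option.map_eq_none_iff] at hw
    exact hlt s (by omega) (key s hw)
  · exact hlt t (by omega) (key t hw)

lemma outputs_false_of_tap_open (h : A none = none) : Outputs A B false :=
  ⟨0, ⟨h, fun _ _ => Nat.zero_le _⟩, rfl⟩

variable {A' : Option Q → Option Q} {B' : Q → Q}

lemma walk_semiconj (f : Q → P) (hA : ∀ w, A (w.map f) = (A' w).map f)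
    (hB : ∀ q, B (f q) = f (B' q)) : ∀ n, walk A B n = (walk A' B' n).map f
  | 0 => rfl
  | n + 1 => by
    rw [walk_succ, walk_succ, walk_semiconj f hA hB n]
    unfold step
    split_ifs
    · exact hA _
    · cases walk A' B' n <;> simp [hB]

lemma Outputs.of_semiconj {b : Bool} (f : Q → P) (hf : Injective f)
    (hA : ∀ w, A (w.map f) = (A' w).map f) (hB : ∀ q, B (f q) = f (B' q))
    (h : Outputs A' B' b) : Outputs A B b := by
  have : haltTimes A B = haltTimes A' B' := by
    ext n
    change walk A B (n + 1) = walk A B n ↔ walk A' B' (n + 1) = walk A' B' n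
    rw [walk_semiconj f hA hB, walk_semiconj f hA hB, (Option.map_injective hf).eq_iff]
  rwa [Outputs, this]

end Walk

section Relay

/-- The tap is connected to the new pipe `none`, whose far end serves as the tap of a game
on the old pipes in which the two players exchange roles. -/
def relayTap (B : Q → Q) : Option (Option Q) → Option (Option Q)
  | none => some none
  | some none => none
  | some (some q) => some (some (B q))

variable {A : Option Q → Option Q} {B : Q → Q}

lemma relayTap_involutive (hB : Involutive B) : Involutive (relayTap B) := by
  rintro (_ | _ | q)
  · rfl
  · rfl
  · simp [relayTap, hB q]

lemma walk_relayTap (hA : Involutive A) (hB : Involutive B) {L : ℕ}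
    (hL : IsLeast (haltTimes A B) L) :
    ∀ n ≤ L + 1, walk (relayTap B) A (n + 1) = some (walk A B n)
  | 0, _ => rfl
  | n + 1, hn => by
    rw [walk_succ, walk_relayTap hA hB hL n (by omega), walk_succ]
    by_cases hn2 : n % 2 = 0
    · simp only [step, if_pos hn2, if_neg (show ¬(n + 1) % 2 = 0 by omega)]
      rfl
    · obtain ⟨q, hq⟩ := Option.ne_none_iff_exists'.mp <|
        walk_ne_none (n := n) hA hB (by omega)
        fun m hm hmem => absurd (hL.2 hmem) (by omega)
      simp only [step, if_neg hn2, if_pos (show (n + 1) % 2 = 0 by omega), hq]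
      rfl

lemma Outputs.relay (hA : Involutive A) (hB : Involutive B) {b : Bool} (h : Outputs A B b) :
    Outputs (relayTap B) A (!b) := by
  obtain ⟨L, hL, rfl⟩ := h
  have hwalk := walk_relayTap hA hB hL
  refine ⟨L + 1, ⟨?_, ?_⟩, Nat.bodd_succ L⟩
  · change walk _ _ (L + 1 + 1) = walk _ _ (L + 1)
    rw [hwalk _ le_rfl, hwalk _ (by omega), hL.1]
  · rintro (_ | m) hm
    · exact (Option.some_ne_none _ hm).elim
    · by_contra hlt
      change walk _ _ (m + 1 + 1) = walk _ _ (m + 1) at hm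
      rw [hwalk _ (by omega), hwalk _ (by omega), Option.some_inj] at hm
      exact absurd (hL.2 hm) (by omega)

end Relay

lemma involutive_of_semiconj {α β : Type} {f : β → β} {g : α → α} {e : α → β}
    (hg : Involutive g) (hfe : ∀ a, f (e a) = e (g a)) (hf : ∀ b ∉ Set.range e, f b = b) :
    Involutive f := by
  intro b
  by_cases hb : b ∈ Set.range e
  · obtain ⟨a, rfl⟩ := hb
    rw [hfe, hfe, hg a]
  · rw [hf b hb, hf b hb]

section Select

variable {ι : Type} [DecidableEq ι] {β : ι → Type}

def selectTap (i₀ : ι) (A : ∀ i, Option (β i) → Option (β i)) :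
    Option (Σ i, β i) → Option (Σ i, β i)
  | none => (A i₀ none).map (Sigma.mk i₀)
  | some ⟨i, q⟩ => if i = i₀ then (A i (some q)).map (Sigma.mk i) else some ⟨i, q⟩

variable {i₀ : ι} {A : ∀ i, Option (β i) → Option (β i)}

lemma selectTap_map_mk (w : Option (β i₀)) :
    selectTap i₀ A (w.map (Sigma.mk i₀)) = (A i₀ w).map (Sigma.mk i₀) := by
  cases w <;> simp [selectTap]

lemma selectTap_of_notMem_range {x : Option (Σ i, β i)}
    (hx : x ∉ Set.range (Option.map (Sigma.mk i₀))) : selectTap i₀ A x = x := by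
  rcases x with _ | ⟨i, q⟩
  · exact absurd ⟨none, rfl⟩ hx
  · by_cases hi : i = i₀
    · subst hi
      exact absurd ⟨some q, rfl⟩ hx
    · simp [selectTap, hi]

lemma selectTap_involutive (hA : Involutive (A i₀)) : Involutive (selectTap i₀ A) :=
  involutive_of_semiconj hA selectTap_map_mk fun _ => selectTap_of_notMem_range

end Select

structure Protocol (U V P : Type) where
  A : U → Option P → Option P
  B : V → P → P
  hA : ∀ u, Involutive (A u)
  hB : ∀ v, Involutive (B v)

namespace Protocol

variable {U V P Q : Type}

def Computes (G : Protocol U V P) (φ : U → V → Bool) : Prop :=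
  ∀ u v, Outputs (G.A u) (G.B v) (φ u v)

def allOpen : Protocol U V P where
  A _ := id
  B _ := id
  hA _ _ := rfl
  hB _ _ := rfl

lemma computes_allOpen : (allOpen : Protocol U V P).Computes fun _ _ => false :=
  fun _ _ => outputs_false_of_tap_open rfl

def relay (R : Protocol V U Q) : Protocol U V (Option Q) where
  A u := relayTap (R.B u)
  B v := R.A v
  hA u := relayTap_involutive (R.hB u)
  hB := R.hA

lemma Computes.relay {R : Protocol V U Q} {φ : V → U → Bool} (h : R.Computes φ) :
    R.relay.Computes fun u v => !φ v u :=
  fun u v => (h v u).relay (R.hA v) (R.hB u)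

def select {ι : Type} [DecidableEq ι] {β : ι → Type} (σ : U → ι)
    (R : ∀ i, Protocol U V (β i)) : Protocol U V (Σ i, β i) where
  A u := selectTap (σ u) fun i => (R i).A u
  B v := Sigma.map id fun i => (R i).B v
  hA u := selectTap_involutive ((R (σ u)).hA u)
  hB v := by
    rintro ⟨i, q⟩
    simp [Sigma.map, (R i).hB v q]

lemma Computes.select {ι : Type} [DecidableEq ι] {β : ι → Type} (σ : U → ι)
    {R : ∀ i, Protocol U V (β i)} {φ : ι → U → V → Bool}
    (h : ∀ i, (R i).Computes (φ i)) : (select σ R).Computes fun u v => φ (σ u) u v :=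
  fun u v => (h (σ u) u v).of_semiconj (Sigma.mk (σ u)) sigma_mk_injective
    (fun w => selectTap_map_mk (A := fun i => (R i).A u) w) fun _ => rfl

def mapEquiv (e : Q ≃ P) (G : Protocol U V Q) : Protocol U V P where
  A u w := (G.A u (w.map e.symm)).map e
  B v p := e (G.B v (e.symm p))
  hA u w := by simp [Option.map_map, G.hA u _]
  hB v p := by simp [G.hB v _]

lemma Computes.mapEquiv (e : Q ≃ P) {G : Protocol U V Q} {φ : U → V → Bool}
    (h : G.Computes φ) : (G.mapEquiv e).Computes φ :=
  fun u v => (h u v).of_semiconj e e.injective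
    (fun w => by
      show ((G.A u) ((w.map e).map e.symm)).map e = _
      simp [Option.map_map])
    fun q => by
      show e (G.B v (e.symm (e q))) = _
      simp

end Protocol

def Computable (U V : Type) (n : ℕ) (φ : U → V → Bool) : Prop :=
  ∃ G : Protocol U V (Fin n), G.Computes φ

namespace Computable

variable {U V : Type} {n : ℕ} {φ : U → V → Bool}

lemma of_computes {P : Type} [Fintype P] {G : Protocol U V P} (h : G.Computes φ)
    (hn : Fintype.card P = n) : Computable U V n φ :=
  ⟨G.mapEquiv (Fintype.equivFinOfCardEq hn), h.mapEquiv _⟩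

lemma const_false : Computable U V n fun _ _ => false :=
  ⟨.allOpen, Protocol.computes_allOpen⟩

lemma relay {φ : V → U → Bool} (h : Computable V U n φ) :
    Computable U V (n + 1) fun u v => !φ v u := by
  obtain ⟨R, hR⟩ := h
  exact of_computes hR.relay (by simp)

lemma sigma {ι : Type} [Fintype ι] [DecidableEq ι] (σ : U → ι) (m : ι → ℕ)
    {φ : ι → U → V → Bool} (h : ∀ i, Computable U V (m i) (φ i)) :
    Computable U V (∑ i, m i) fun u v => φ (σ u) u v := by
  choose R hR using h
  exact of_computes (Protocol.Computes.select σ hR) (by simp)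

lemma succ_of_forall_eq_false_or
    (h : (∀ u v, φ u v = false) ∨ Computable V U n fun v u => !φ u v) :
    Computable U V (n + 1) φ := by
  rcases h with hφ | hK
  · obtain rfl : φ = fun _ _ => false := funext₂ hφ
    exact .const_false
  · simpa using hK.relay

lemma node_owned_by_tap_holder {d : ℕ} (e : Fin d → ℕ) (g : U → Fin d)
    (φ : Fin d → U → V → Bool)
    (hV : ∀ j, (∀ u v, φ j u v = false) ∨ Computable V U (e j) fun v u => !φ j u v) :
    Computable U V (d + ∑ j, e j) fun u v => φ (g u) u v := by
  convert sigma g (fun j => e j + 1) fun j => succ_of_forall_eq_false_or (hV j) using 1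
  simp [Finset.sum_add_distrib, add_comm]

lemma node_owned_by_other {d : ℕ} (e : Fin d → ℕ) (g : V → Fin d)
    (φ : Fin d → U → V → Bool)
    (hU : ∀ j, (∀ u v, φ j u v = true) ∨ Computable U V (e j) (φ j))
    (hV : ∀ j, (∀ u v, φ j u v = false) ∨ Computable V U (e j) fun v u => !φ j u v) :
    Computable U V (d + ∑ j, e j) fun u v => φ (g v) u v := by
  by_cases hK : ∃ jp, Computable V U (e jp) fun v u => !φ jp u v
  · obtain ⟨jp, hK⟩ := hK
    -- `none` stands for `jp`, whose edge carries the tap over to the owner of the node.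
    have hR : ∀ i, Computable V U (i.elim (e jp) fun j => e j + 1)
        fun v u => !φ (Equiv.optionSubtypeNe jp i) u v := by
      rintro (_ | j)
      · exact hK
      · exact succ_of_forall_eq_false_or
          ((hU j).imp (fun h v u => by simp [h]) (by simpa using ·))
    have h := (sigma (fun v => (Equiv.optionSubtypeNe jp).symm (g v)) _ hR).relay
    simp only [Bool.not_not, Equiv.apply_symm_apply] at h
    have hcard :
        d + ∑ j, e j = (∑ i : Option {j // j ≠ jp}, i.elim (e jp) fun j => e j + 1) + 1 := by
      have hsplit := Fintype.sum_eq_add_sum_subtype_ne (fun j => e j + 1) jp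
      simp only [Finset.sum_add_distrib, Finset.sum_const, Finset.card_univ, Fintype.card_fin,
        smul_eq_mul, mul_one] at hsplit
      simp only [Fintype.sum_option, Option.elim, Finset.sum_add_distrib, Finset.sum_const,
        Finset.card_univ, smul_eq_mul, mul_one]
      omega
    rwa [hcard]
  · have hφ : (fun u v => φ (g v) u v) = fun _ _ => false :=
      funext₂ fun u v => (hV (g v)).resolve_right (fun h => hK ⟨g v, h⟩) u v
    rw [hφ]
    exact .const_false

end Computable

end GardenHose

namespace ProtTree

open GardenHose

variable {X Y : Type}

lemma forall_eval_eq_or (t : ProtTree X Y) (b : Bool) {p : Prop} (h : t ≠ .leaf b → p) :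
    (∀ x y, t.eval x y = b) ∨ p := by
  by_cases ht : t = .leaf b
  · exact .inl fun x y => by subst ht; rfl
  · exact .inr (h ht)

theorem computable : ∀ t : ProtTree X Y,
    (t ≠ .leaf true → Computable X Y t.edges t.eval) ∧
    (t ≠ .leaf false → Computable Y X t.edges fun y x => !t.eval x y)
  | .leaf false => ⟨fun _ => .const_false, fun h => absurd rfl h⟩
  | .leaf true => ⟨fun h => absurd rfl h, fun _ => .const_false⟩
  | .anode d g c => by
    have hX j := (c j).forall_eval_eq_or true (c j).computable.1
    have hY j := (c j).forall_eval_eq_or false (c j).computable.2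
    refine ⟨fun _ => .node_owned_by_tap_holder _ g (fun j => (c j).eval) hY, fun _ => ?_⟩
    exact .node_owned_by_other (fun j => (c j).edges) g (fun j y x => !(c j).eval x y)
      (fun j => (hY j).imp_left fun h y x => by simp [h])
      (fun j => (hX j).imp (fun h y x => by simp [h]) (by simpa using ·))
  | .bnode d g c => by
    have hX j := (c j).forall_eval_eq_or true (c j).computable.1
    have hY j := (c j).forall_eval_eq_or false (c j).computable.2
    refine ⟨fun _ => .node_owned_by_other _ g (fun j => (c j).eval) hX hY, fun _ => ?_⟩
    exact .node_owned_by_tap_holder (fun j => (c j).edges) g (fun j y x => !(c j).eval x y)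
      (fun j => (hX j).imp (fun h y x => by simp [h]) (by simpa using ·))

end ProtTree

namespace GardenHose

lemma ghWalk_eq_walk {s : ℕ} (A : Option (Fin s) → Option (Fin s))
    (B : Fin s → Fin s) : ∀ n, ghWalk A B n = walk A B n
  | 0 => rfl
  | n + 1 => by
    show ghStep A B n (ghWalk A B n) = step A B n (walk A B n)
    rw [ghWalk_eq_walk A B n]
    rfl

lemma setOf_ghStep_eq {s : ℕ} (A : Option (Fin s) → Option (Fin s))
    (B : Fin s → Fin s) :
    {n | ghStep A B n (ghWalk A B n) = ghWalk A B n} = haltTimes A B := by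
  ext n
  change ghWalk A B (n + 1) = _ ↔ walk A B (n + 1) = _
  rw [ghWalk_eq_walk, ghWalk_eq_walk]

end GardenHose

theorem GH_le_of_computable {X Y : Type} {f : X → Y → Bool} {s : ℕ}
    (h : GardenHose.Computable X Y s f) : GH f ≤ s := by
  obtain ⟨G, hG⟩ := h
  refine Nat.sInf_le ⟨⟨G.A, G.B, G.hA, G.hB⟩, fun x y => ?_⟩
  obtain ⟨L, hL, hpar⟩ := hG x y
  rw [GardenHose.setOf_ghStep_eq]
  refine ⟨hL.nonempty, ?_⟩
  rw [ghLen, GardenHose.setOf_ghStep_eq, hL.csInf_eq, Nat.mod_two_of_bodd, hpar]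
  cases f x y <;> simp

/-- The garden-hose complexity of `f` is at most the number of edges in any
deterministic communication protocol tree computing `f`. -/
theorem GH_le_protocol_tree_edges {X Y : Type} (f : X → Y → Bool)
    (T : ProtTree X Y) (hT : ∀ x y, T.eval x y = f x y)
    (hnl : ∀ b, T ≠ ProtTree.leaf b) :
    GH f ≤ T.edges := by
  obtain rfl : T.eval = f := funext₂ hT
  exact GH_le_of_computable (T.computable.1 (hnl true))
end

section
/- For every Boolean function f and every k ≥ 1, GH_k(f) ≥ 2^{D_k(f)/k} / 2, equivalently D_k(f) ≤ k·(⌈log₂ GH_k(f)⌉ + O(1)), where GH_k(f) is the minimum size of a garden-hose protocol for f in which at most k pipes carry water on any input, and D_k(f) is the deterministic communication complexity of f with at most k messages, Alice sending first. -/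
/-- A deterministic communication protocol tree with one-bit messages: each
internal node belongs to Alice (`anode`) or Bob (`bnode`) and branches on one
communicated bit. -/
inductive CTree (X Y : Type) where
  | leaf : Bool → CTree X Y
  | anode : (X → Bool) → (Bool → CTree X Y) → CTree X Y
  | bnode : (Y → Bool) → (Bool → CTree X Y) → CTree X Y

/-- The output of the protocol on input `(x, y)`. -/
def CTree.eval {X Y : Type} : CTree X Y → X → Y → Bool
  | .leaf b, _, _ => b
  | .anode g c, x, y => (c (g x)).eval x y
  | .bnode g c, x, y => (c (g y)).eval x y

/-- The depth of the tree, i.e. the worst-case number of bits communicated. -/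
def CTree.depth {X Y : Type} : CTree X Y → ℕ
  | .leaf _ => 0
  | .anode _ c => 1 + max (c false).depth (c true).depth
  | .bnode _ c => 1 + max (c false).depth (c true).depth

/-- The worst-case number of messages (maximal blocks of bits sent by one
player) along a path of the tree; the parameter records the previous speaker
(`some true` = Alice, `some false` = Bob, `none` at the root). -/
def CTree.rounds {X Y : Type} : Option Bool → CTree X Y → ℕ
  | _, .leaf _ => 0
  | p, .anode _ c =>
      (if p = some true then 0 else 1) +
        max ((c false).rounds (some true)) ((c true).rounds (some true))
  | p, .bnode _ c =>
      (if p = some false then 0 else 1) +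
        max ((c false).rounds (some false)) ((c true).rounds (some false))

/-- Alice speaks first (if anybody speaks). -/
def CTree.aliceFirst {X Y : Type} : CTree X Y → Prop
  | .bnode _ _ => False
  | _ => True

/-!
The players simulate the flow of water: before the `n`-th move of the water, both know the
pipe end `w` it has reached, and the owner of that move (Alice for even `n`, Bob for odd `n`)
announces in `⌈log₂ (s + 1)⌉ + 1` bits where the water goes next. If the announced pipe end is
`w` itself, the water has stopped, and both players know the output `n mod 2`. A path of
length at most `k` thus costs at most `k` messages, Alice's first.
-/

namespace CTree

variable {X Y : Type}

def swap : CTree X Y → CTree Y X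
  | .leaf b => .leaf b
  | .anode g c => .bnode g fun b => (c b).swap
  | .bnode g c => .anode g fun b => (c b).swap

@[simp]
theorem eval_swap (T : CTree X Y) (x : X) (y : Y) : T.swap.eval y x = T.eval x y := by
  induction T with
  | leaf => rfl
  | anode g c ih => simp only [swap, eval, ih]
  | bnode g c ih => simp only [swap, eval, ih]

@[simp]
theorem depth_swap (T : CTree X Y) : T.swap.depth = T.depth := by
  induction T with
  | leaf => rfl
  | anode g c ih => simp only [swap, depth, ih]
  | bnode g c ih => simp only [swap, depth, ih]

theorem rounds_swap (T : CTree X Y) (p : Option Bool) :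
    T.swap.rounds p = T.rounds (p.map not) := by
  induction T generalizing p with
  | leaf => rfl
  | anode g c ih => cases p <;> simp [swap, rounds, ih]
  | bnode g c ih => cases p <;> simp [swap, rounds, ih]

theorem rounds_le_rounds_add_one (T : CTree X Y) (p q : Option Bool) :
    T.rounds p ≤ T.rounds q + 1 := by
  cases T with
  | leaf => exact Nat.zero_le _
  | anode | bnode => simp only [rounds]; split_ifs <;> omega

def sendA : ℕ → (X → ℕ) → (ℕ → CTree X Y) → CTree X Y
  | 0, _, cont => cont 0
  | m + 1, g, cont => .anode (fun x => decide (g x % 2 = 1)) fun b =>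
      sendA m (fun x => g x / 2) fun r => cont (2 * r + b.toNat)

def sendB (m : ℕ) (g : Y → ℕ) (cont : ℕ → CTree X Y) : CTree X Y :=
  (sendA m g fun r => (cont r).swap).swap

theorem eval_sendA (m : ℕ) (g : X → ℕ) (cont : ℕ → CTree X Y) (x : X) (y : Y) :
    (sendA m g cont).eval x y = (cont (g x % 2 ^ m)).eval x y := by
  induction m generalizing g cont with
  | zero => simp [sendA, Nat.mod_one]
  | succ m ih =>
    have hbit : (decide (g x % 2 = 1)).toNat = g x % 2 := by
      rcases Nat.mod_two_eq_zero_or_one (g x) with h | h <;> simp [h]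
    have hlow : 2 * (g x / 2 % 2 ^ m) + g x % 2 = g x % 2 ^ (m + 1) := by
      rw [pow_succ', Nat.mod_mul]
      omega
    simp only [sendA, eval, ih, hbit, hlow]

theorem eval_sendB (m : ℕ) (g : Y → ℕ) (cont : ℕ → CTree X Y) (x : X) (y : Y) :
    (sendB m g cont).eval x y = (cont (g y % 2 ^ m)).eval x y := by
  simp [sendB, eval_sendA]

theorem depth_sendA_le {m d : ℕ} (g : X → ℕ) {cont : ℕ → CTree X Y}
    (h : ∀ r, (cont r).depth ≤ d) : (sendA m g cont).depth ≤ m + d := by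
  induction m generalizing g cont with
  | zero => simpa [sendA] using h 0
  | succ m ih =>
    have := ih (fun x => g x / 2) (fun r => h (2 * r + false.toNat))
    have := ih (fun x => g x / 2) (fun r => h (2 * r + true.toNat))
    simp only [sendA, depth]
    omega

theorem depth_sendB_le {m d : ℕ} (g : Y → ℕ) {cont : ℕ → CTree X Y}
    (h : ∀ r, (cont r).depth ≤ d) : (sendB m g cont).depth ≤ m + d := by
  simpa [sendB] using depth_sendA_le g (cont := fun r => (cont r).swap) (by simpa using h)

theorem rounds_sendA_le {m d : ℕ} (g : X → ℕ) {cont : ℕ → CTree X Y}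
    (h : ∀ r, (cont r).rounds (some true) ≤ d) : (sendA m g cont).rounds (some true) ≤ d := by
  induction m generalizing g cont with
  | zero => exact h 0
  | succ m ih =>
    simp only [sendA, rounds, if_pos, zero_add]
    exact max_le (ih _ fun r => h _) (ih _ fun r => h _)

theorem rounds_sendB_le {m d : ℕ} (g : Y → ℕ) {cont : ℕ → CTree X Y}
    (h : ∀ r, (cont r).rounds (some false) ≤ d) :
    (sendB m g cont).rounds (some false) ≤ d := by
  simp only [sendB, rounds_swap, Option.map_some, Bool.not_false]
  exact rounds_sendA_le g fun r => by simpa [rounds_swap] using h r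

end CTree

open CTree

section Simulation

variable {X Y : Type} {s : ℕ} (A : X → Option (Fin s) → Option (Fin s)) (B : Y → Fin s → Fin s)

def encodeEnd (v : Option (Fin s)) : ℕ := (finSuccEquiv s).symm v

def decodeEnd (e : ℕ) : Option (Fin s) :=
  if h : e < s + 1 then finSuccEquiv s ⟨e, h⟩ else none

theorem encodeEnd_lt (v : Option (Fin s)) : encodeEnd v < s + 1 :=
  ((finSuccEquiv s).symm v).isLt

@[simp]
theorem decodeEnd_encodeEnd (v : Option (Fin s)) : decodeEnd (encodeEnd v) = v := by
  rw [decodeEnd, dif_pos (encodeEnd_lt v)]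
  exact (finSuccEquiv s).apply_symm_apply v

theorem encodeEnd_lt_two_pow (v : Option (Fin s)) :
    encodeEnd v < 2 ^ (Nat.clog 2 (s + 1) + 1) :=
  calc encodeEnd v < s + 1 := encodeEnd_lt v
    _ ≤ 2 ^ Nat.clog 2 (s + 1) := Nat.le_pow_clog one_lt_two _
    _ ≤ 2 ^ (Nat.clog 2 (s + 1) + 1) := Nat.pow_le_pow_right two_pos (Nat.le_succ _)

def announce (n : ℕ) (w : Option (Fin s)) (cont : ℕ → CTree X Y) : CTree X Y :=
  if n % 2 = 0 then sendA (Nat.clog 2 (s + 1) + 1) (fun x => encodeEnd (A x w)) cont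
  else sendB (Nat.clog 2 (s + 1) + 1) (fun y => encodeEnd (Option.map (B y) w)) cont

theorem eval_announce (n : ℕ) (w : Option (Fin s)) (cont : ℕ → CTree X Y) (x : X) (y : Y) :
    (announce A B n w cont).eval x y = (cont (encodeEnd (ghStep (A x) (B y) n w))).eval x y := by
  unfold announce ghStep
  split_ifs
  · rw [eval_sendA, Nat.mod_eq_of_lt (encodeEnd_lt_two_pow _)]
  · rw [eval_sendB, Nat.mod_eq_of_lt (encodeEnd_lt_two_pow _)]

theorem depth_announce_le {d : ℕ} (n : ℕ) (w : Option (Fin s)) {cont : ℕ → CTree X Y}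
    (h : ∀ e, (cont e).depth ≤ d) :
    (announce A B n w cont).depth ≤ Nat.clog 2 (s + 1) + 1 + d := by
  unfold announce
  split_ifs
  · exact depth_sendA_le _ h
  · exact depth_sendB_le _ h

theorem rounds_announce_le {d : ℕ} (n : ℕ) (w : Option (Fin s)) {cont : ℕ → CTree X Y}
    (h : ∀ e p, (cont e).rounds p ≤ d) (p : Option Bool) :
    (announce A B n w cont).rounds p ≤ d + 1 := by
  unfold announce
  split_ifs
  · exact (rounds_le_rounds_add_one _ p (some true)).trans
      (Nat.succ_le_succ (rounds_sendA_le _ fun e => h e _))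
  · exact (rounds_le_rounds_add_one _ p (some false)).trans
      (Nat.succ_le_succ (rounds_sendB_le _ fun e => h e _))

/-- The simulation of at most `j` further moves of the water, the next one being move `n`,
from the pipe end `w`. -/
def simTree : ℕ → ℕ → Option (Fin s) → CTree X Y
  | 0, n, _ => .leaf (decide (n % 2 = 1))
  | j + 1, n, w => announce A B n w fun e =>
      if decodeEnd e = w then .leaf (decide (n % 2 = 1)) else simTree j (n + 1) (decodeEnd e)

theorem simTree_aliceFirst (j : ℕ) (w : Option (Fin s)) : (simTree A B j 0 w).aliceFirst := by
  cases j <;> simp [simTree, announce, sendA, aliceFirst]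

theorem depth_simTree_le (j n : ℕ) (w : Option (Fin s)) :
    (simTree A B j n w).depth ≤ j * (Nat.clog 2 (s + 1) + 1) := by
  induction j generalizing n w with
  | zero => simp [simTree, depth]
  | succ j ih =>
    refine (depth_announce_le A B (d := j * (Nat.clog 2 (s + 1) + 1)) n w fun e => ?_).trans_eq
      (by ring)
    split_ifs
    · simp [depth]
    · exact ih _ _

theorem rounds_simTree_le (j n : ℕ) (w : Option (Fin s)) (p : Option Bool) :
    (simTree A B j n w).rounds p ≤ j := by
  induction j generalizing n w p with
  | zero => simp [simTree, rounds]
  | succ j ih =>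
    refine rounds_announce_le A B n w (fun e q => ?_) p
    split_ifs
    · simp [rounds]
    · exact ih _ _ _

theorem eval_simTree (x : X) (y : Y)
    (hhalt : {n | ghStep (A x) (B y) n (ghWalk (A x) (B y) n) = ghWalk (A x) (B y) n}.Nonempty)
    (j n : ℕ) (hn : n ≤ ghLen (A x) (B y)) (hj : ghLen (A x) (B y) ≤ n + j) :
    (simTree A B j n (ghWalk (A x) (B y) n)).eval x y =
      decide (ghLen (A x) (B y) % 2 = 1) := by
  induction j generalizing n with
  | zero => simp [simTree, eval, le_antisymm hj hn]
  | succ j ih =>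
    rw [simTree, eval_announce, decodeEnd_encodeEnd]
    split_ifs with hstop
    · have hL : ghLen (A x) (B y) = n := le_antisymm (Nat.sInf_le hstop) hn
      simp [eval, hL]
    · have hne : n ≠ ghLen (A x) (B y) := fun h => hstop (h ▸ Nat.sInf_mem hhalt)
      exact ih (n + 1) (by omega) (by omega)

end Simulation

/-- Time-bounded garden-hose protocols versus round-bounded communication:
if `f` has a garden-hose protocol of size `s` in which at most `k` pipes carry
water on any input (i.e. the path from the tap has length at most `k`), then
`f` has a deterministic communication protocol with at most `k` messages,
Alice speaking first, of total communication `k · (⌈log₂ s⌉ + O(1))`.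
Equivalently, `D_k(f) ≤ k · (⌈log₂ GH_k(f)⌉ + O(1))`, i.e.
`GH_k(f) ≥ 2^{D_k(f)/k} / 2^{O(1)}`. -/
theorem Dk_le_time_bounded_GH :
    ∃ C : ℕ, 0 < C ∧
      ∀ (X Y : Type) (f : X → Y → Bool) (k s : ℕ), 1 ≤ k →
        ∀ P : GHProtocol X Y s, P.Computes f →
          (∀ x y, ghLen (P.A x) (P.B y) ≤ k) →
          ∃ T : CTree X Y, (∀ x y, T.eval x y = f x y) ∧
            T.aliceFirst ∧ T.rounds none ≤ k ∧
            T.depth ≤ k * (Nat.clog 2 (s + 1) + C) := by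
  refine ⟨1, one_pos, fun X Y f k s _ P hP htime => ⟨simTree P.A P.B k 0 none, fun x y => ?_,
    simTree_aliceFirst _ _ k none, rounds_simTree_le _ _ k 0 none none,
    depth_simTree_le _ _ k 0 none⟩⟩
  exact (eval_simTree P.A P.B x y (hP x y).1 k 0 (Nat.zero_le _) (by simpa using htime x y)).trans
    (Bool.eq_iff_iff.mpr (by simpa using (hP x y).2))
end

section
/- The pointer jumping function PJ_k can be computed by a garden-hose protocol of size k·n and time k. -/
/-- `k`-fold pointer jumping: starting from `v₀`, alternately apply Alice's
bijection `fA : U → V` and Bob's bijection `fB : V → U` (both vertex sets being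
copies of `Fin (n+1)`). -/
def pjIter {n : ℕ} (fA fB : Equiv.Perm (Fin (n + 1))) (v0 : Fin (n + 1)) :
    ℕ → Fin (n + 1)
  | 0 => v0
  | m + 1 =>
      if m % 2 = 0 then fA (pjIter fA fB v0 m) else fB (pjIter fA fB v0 m)

/-- The pointer jumping function `PJ_k`: the XOR of all bits of the binary name
of the vertex `f_k(v₀)` reached after `k` pointer jumps. -/
def PJ (n k : ℕ) (fA fB : Equiv.Perm (Fin (n + 1))) : Bool :=
  decide (Odd (((pjIter fA fB 0 k).val.bits.count true)))


/-!
Number the pipes by levels: the `n + 1` pipes of block `j` form level `j + 1`, one for each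
vertex, and the tap is level `0`, sitting above `v₀`. On her side Alice joins `(m, w)` to
`(m + 1, fA w)` for even `m`, Bob on his side `(m, w)` to `(m + 1, fB w)` for odd `m`. Both
placements are matchings, and by induction the water is at `(m, f_m(v₀))` after `m` steps, so
it would stop after exactly `k` steps. To output the parity of the name of `f_k(v₀)`, the last
jumper leaves the pipe into `(k, w)` open whenever `k` has the wrong parity for `w`; then the
water stops after `k - 1` steps exactly when `f_k(v₀)` has the wrong parity.
-/

namespace PointerJumping

open Function

section Ladder

variable {V : Type*} (g : Equiv.Perm V) (p : ℕ) (keep : ℕ → V → V → Prop)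
  [∀ i w w', Decidable (keep i w w')]

def levelRange (k : ℕ) (v₀ : V) : Set (ℕ × V) :=
  {y | y = (0, v₀) ∨ 0 < y.1 ∧ y.1 ≤ k}

/-- The matching of a player who owns the pipes from level `i` to level `i + 1` for
`i ≡ p [MOD 2]`: such a pipe joins `(i, w)` to `(i + 1, g w)`, and is laid only if
`keep i w (g w)`. -/
def ladder : ℕ × V → ℕ × V
  | (i, w) =>
    if i % 2 = p % 2 then
      if keep i w (g w) then (i + 1, g w) else (i, w)
    else
      if 0 < i ∧ keep (i - 1) (g.symm w) w then (i - 1, g.symm w) else (i, w)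

theorem ladder_of_mod_eq {i : ℕ} (h : i % 2 = p % 2) (w : V) :
    ladder g p keep (i, w) = if keep i w (g w) then (i + 1, g w) else (i, w) :=
  if_pos h

theorem ladder_involutive : Involutive (ladder g p keep) := by
  rintro ⟨i, w⟩
  by_cases hi : i % 2 = p % 2
  · by_cases hk : keep i w (g w)
    · have hback : ¬(i + 1) % 2 = p % 2 := by omega
      simp [ladder, hi, hk, hback]
    · simp [ladder, hi, hk]
  · by_cases hk : 0 < i ∧ keep (i - 1) (g.symm w) w
    · have hfwd : (i - 1) % 2 = p % 2 := by omega
      simp [ladder, hi, hk, hfwd]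
      omega
    · simp [ladder, hi, hk]

theorem ladder_mapsTo {k : ℕ} {v₀ : V}
    (hkeep : ∀ i w w', keep i w w' → i < k ∧ (i = 0 → w = v₀)) :
    Set.MapsTo (ladder g p keep) (levelRange k v₀) (levelRange k v₀) := by
  rintro ⟨i, w⟩ hy
  dsimp only [ladder]
  split_ifs with hi hk hk
  · exact Or.inr ⟨i.succ_pos, (hkeep _ _ _ hk).1⟩
  · exact hy
  · obtain ⟨hlt, hv₀⟩ := hkeep _ _ _ hk.2
    rcases Nat.eq_zero_or_pos (i - 1) with h0 | h0
    · simp [levelRange, h0, hv₀ h0]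
    · exact Or.inr ⟨h0, hlt.le⟩
  · exact hy

theorem ladder_zero (hp : p % 2 = 1) (v : V) : ladder g p keep (0, v) = (0, v) := by
  simp [ladder, hp]

end Ladder

theorem involutive_comp_of_leftInverse {α β : Type*} {e : α → β} {d : β → α} {σ : β → β}
    (hde : LeftInverse d e) (hσ : Involutive σ) (hrange : ∀ a, e (d (σ (e a))) = σ (e a)) :
    Involutive (d ∘ σ ∘ e) := fun a => by
  simp only [comp_apply, hrange, hσ (e a), hde a]

theorem map_getD_of_involutive {α : Type*} {σ : Option α → Option α} (hσ : Involutive σ)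
    (hnone : σ none = none) : Option.map (fun a => (σ (some a)).getD a) = σ := by
  funext x
  cases x with
  | none => exact hnone.symm
  | some a =>
    cases h : σ (some a) with
    | none => simpa [hnone, h] using hσ (some a)
    | some b => simp [h]

theorem involutive_of_map_eq {α : Type*} {τ : α → α} {σ : Option α → Option α}
    (h : Option.map τ = σ) (hσ : Involutive σ) : Involutive τ := fun a =>
  Option.some_injective _ <| by
    have h2 := hσ (some a)
    rw [← h] at h2
    exact h2

section Protocol

variable {n : ℕ} (k : ℕ)

def FinalOpen (w : Fin (n + 1)) : Prop :=
  (k + w.val.bits.count true) % 2 = 1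

instance (w : Fin (n + 1)) : Decidable (FinalOpen k w) :=
  inferInstanceAs (Decidable (_ = _))

def Keep (i : ℕ) (w w' : Fin (n + 1)) : Prop :=
  i < k ∧ (i = 0 → w = 0) ∧ (i + 1 = k → ¬FinalOpen k w')

instance (i : ℕ) (w w' : Fin (n + 1)) : Decidable (Keep k i w w') :=
  inferInstanceAs (Decidable (_ ∧ _ ∧ _))

def toLevel : Option (Fin (k * (n + 1))) → ℕ × Fin (n + 1)
  | none => (0, 0)
  | some x => ((finProdFinEquiv.symm x).1 + 1, (finProdFinEquiv.symm x).2)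

def ofLevel (y : ℕ × Fin (n + 1)) : Option (Fin (k * (n + 1))) :=
  if h : 0 < y.1 ∧ y.1 ≤ k then some (finProdFinEquiv (⟨y.1 - 1, by omega⟩, y.2)) else none

theorem ofLevel_toLevel : LeftInverse (ofLevel (n := n) k) (toLevel k) := by
  rintro (_ | x)
  · simp [toLevel, ofLevel]
  · have h : 0 < (finProdFinEquiv.symm x).1.val + 1 ∧ (finProdFinEquiv.symm x).1.val + 1 ≤ k :=
      ⟨Nat.succ_pos _, (finProdFinEquiv.symm x).1.isLt⟩
    simp only [toLevel, ofLevel, dif_pos h, Nat.add_sub_cancel, Fin.eta, Prod.mk.eta,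
      Equiv.apply_symm_apply]

theorem toLevel_ofLevel {y : ℕ × Fin (n + 1)} (hy : y ∈ levelRange k 0) :
    toLevel k (ofLevel k y) = y := by
  obtain ⟨i, w⟩ := y
  rcases hy with h | h
  · simp_all [toLevel, ofLevel]
  · simp only [ofLevel, dif_pos h, toLevel, Equiv.symm_apply_apply, Prod.mk.injEq, and_true]
    omega

theorem toLevel_mem_levelRange (x : Option (Fin (k * (n + 1)))) :
    toLevel k x ∈ levelRange k 0 := by
  rcases x with _ | x
  · exact Or.inl rfl
  · exact Or.inr ⟨Nat.succ_pos _, (finProdFinEquiv.symm x).1.isLt⟩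

variable (g : Equiv.Perm (Fin (n + 1))) (p : ℕ)

def play : Option (Fin (k * (n + 1))) → Option (Fin (k * (n + 1))) :=
  ofLevel k ∘ ladder g p (Keep k) ∘ toLevel k

theorem toLevel_play (x : Option (Fin (k * (n + 1)))) :
    toLevel k (play k g p x) = ladder g p (Keep k) (toLevel k x) :=
  toLevel_ofLevel k (ladder_mapsTo g p (Keep k) (fun _ _ _ h => ⟨h.1, h.2.1⟩)
    (toLevel_mem_levelRange k x))

theorem play_involutive : Involutive (play k g p) :=
  involutive_comp_of_leftInverse (ofLevel_toLevel k) (ladder_involutive g p (Keep k))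
    (toLevel_play k g p)

theorem play_none (hp : p % 2 = 1) : play k g p none = none := by
  simp [play, toLevel, ladder_zero g p (Keep k) hp, ofLevel]

end Protocol

def protocol (n k : ℕ) :
    GHProtocol (Equiv.Perm (Fin (n + 1))) (Equiv.Perm (Fin (n + 1))) (k * (n + 1)) where
  A fA := play k fA 0
  -- `play k fB 1` fixes the tap and hence maps pipes to pipes: the default of `getD` is never used
  B fB x := (play k fB 1 (some x)).getD x
  hA fA := play_involutive k fA 0
  hB fB := involutive_of_map_eq
    (map_getD_of_involutive (play_involutive k fB 1) (play_none k fB 1 rfl))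
    (play_involutive k fB 1)

theorem map_protocol_B (n k : ℕ) (fB : Equiv.Perm (Fin (n + 1))) :
    Option.map ((protocol n k).B fB) = play k fB 1 :=
  map_getD_of_involutive (play_involutive k fB 1) (play_none k fB 1 rfl)

section Walk

variable {n : ℕ} (k : ℕ) (fA fB : Equiv.Perm (Fin (n + 1)))

def levelStep (m : ℕ) : ℕ × Fin (n + 1) → ℕ × Fin (n + 1) :=
  if m % 2 = 0 then ladder fA 0 (Keep k) else ladder fB 1 (Keep k)

def levelWalk : ℕ → ℕ × Fin (n + 1)
  | 0 => (0, 0)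
  | m + 1 => levelStep k fA fB m (levelWalk m)

theorem toLevel_ghStep (m : ℕ) (x : Option (Fin (k * (n + 1)))) :
    toLevel k (ghStep ((protocol n k).A fA) ((protocol n k).B fB) m x) =
      levelStep k fA fB m (toLevel k x) := by
  unfold ghStep levelStep
  split_ifs
  · exact toLevel_play k fA 0 x
  · rw [map_protocol_B]
    exact toLevel_play k fB 1 x

theorem toLevel_ghWalk (m : ℕ) :
    toLevel k (ghWalk ((protocol n k).A fA) ((protocol n k).B fB) m) = levelWalk k fA fB m := by
  induction m with
  | zero => rfl
  | succ m ih => rw [levelWalk, ← ih, ← toLevel_ghStep]; rfl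

theorem ghHaltSet_protocol :
    {m | ghStep ((protocol n k).A fA) ((protocol n k).B fB) m
        (ghWalk ((protocol n k).A fA) ((protocol n k).B fB) m)
        = ghWalk ((protocol n k).A fA) ((protocol n k).B fB) m} =
      {m | levelStep k fA fB m (levelWalk k fA fB m) = levelWalk k fA fB m} := by
  ext m
  rw [Set.mem_ofPred_eq, Set.mem_ofPred_eq, ← (ofLevel_toLevel k).injective.eq_iff,
    toLevel_ghStep, toLevel_ghWalk]

end Walk

section Chain

variable {n : ℕ} (k : ℕ) (fA fB : Equiv.Perm (Fin (n + 1)))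

local notation "f" => pjIter fA fB 0

def stopTime : ℕ := if FinalOpen k (f k) then k - 1 else k

theorem stopTime_le : stopTime k fA fB ≤ k := by
  unfold stopTime
  split_ifs <;> omega

theorem stopTime_mod_two : stopTime k fA fB % 2 = (f k).val.bits.count true % 2 := by
  rcases Nat.eq_zero_or_pos k with rfl | hk
  · simp [stopTime, FinalOpen, pjIter]
  · unfold stopTime
    split_ifs with h <;> (unfold FinalOpen at h; omega)

theorem keep_iff_lt_stopTime (m : ℕ) : Keep k m (f m) (f (m + 1)) ↔ m < stopTime k fA fB := by
  have hf0 : f 0 = 0 := rfl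
  unfold Keep stopTime
  constructor
  · rintro ⟨hm, -, hopen⟩
    split_ifs with h
    · have : m + 1 ≠ k := fun hk => hopen hk (hk ▸ h)
      omega
    · exact hm
  · intro hm
    refine ⟨by split_ifs at hm <;> omega, fun h0 => h0 ▸ hf0, fun hk => ?_⟩
    rw [hk]
    intro h
    rw [if_pos h] at hm
    omega

theorem levelStep_along_chain (m : ℕ) :
    levelStep k fA fB m (m, f m) =
      if Keep k m (f m) (f (m + 1)) then (m + 1, f (m + 1)) else (m, f m) := by
  unfold levelStep
  by_cases hm : m % 2 = 0
  · have hf : f (m + 1) = fA (f m) := by simp [pjIter, hm]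
    rw [if_pos hm, ladder_of_mod_eq _ _ _ hm, hf]
  · have hf : f (m + 1) = fB (f m) := by simp [pjIter, hm]
    rw [if_neg hm, ladder_of_mod_eq _ _ _ (by omega), hf]

theorem levelWalk_of_le_stopTime {m : ℕ} (hm : m ≤ stopTime k fA fB) :
    levelWalk k fA fB m = (m, f m) := by
  induction m with
  | zero => rfl
  | succ m ih =>
    rw [levelWalk, ih (by omega), levelStep_along_chain,
      if_pos ((keep_iff_lt_stopTime k fA fB m).2 (by omega))]

theorem isLeast_stopTime :
    IsLeast {m | levelStep k fA fB m (levelWalk k fA fB m) = levelWalk k fA fB m}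
      (stopTime k fA fB) := by
  refine ⟨?_, fun m hm => ?_⟩
  · rw [Set.mem_ofPred_eq, levelWalk_of_le_stopTime k fA fB le_rfl, levelStep_along_chain,
      if_neg ((keep_iff_lt_stopTime k fA fB _).not.2 (lt_irrefl _))]
  · by_contra! hlt
    rw [Set.mem_ofPred_eq, levelWalk_of_le_stopTime k fA fB hlt.le, levelStep_along_chain,
      if_pos ((keep_iff_lt_stopTime k fA fB m).2 hlt)] at hm
    simp at hm

end Chain

end PointerJumping

open PointerJumping

/-- `PJ_k` on vertex sets of size `n + 1` can be computed by a garden-hose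
protocol of size `k · (n + 1)` and time `k`. -/
theorem GH_pointer_jumping (n k : ℕ) :
    ∃ P : GHProtocol (Equiv.Perm (Fin (n + 1))) (Equiv.Perm (Fin (n + 1)))
        (k * (n + 1)),
      P.Computes (PJ n k) ∧
      ∀ fA fB, ghLen (P.A fA) (P.B fB) ≤ k := by
  refine ⟨protocol n k, fun fA fB => ?_, fun fA fB => ?_⟩ <;>
    have hL := ghHaltSet_protocol k fA fB ▸ isLeast_stopTime k fA fB
  · refine ⟨⟨_, hL.1⟩, ?_⟩
    rw [ghLen, hL.csInf_eq, PJ, decide_eq_true_eq, Nat.odd_iff, stopTime_mod_two]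
  · rw [ghLen, hL.csInf_eq]
    exact stopTime_le k fA fB
end

section
/- The private-coin randomized garden-hose complexity of Equality on n-bit inputs satisfies RGH^{pri}(EQ_n) = Ω(√n / log n). -/
/-- A private-coin randomized garden-hose protocol with `s` pipes: Alice's
matching depends on `(x, r_A)` and Bob's on `(y, r_B)` for private random
strings `r_A`, `r_B` drawn uniformly from `Fin mA` and `Fin mB`. -/
structure RGHProtocol (X Y : Type) (s mA mB : ℕ) where
  A : X → Fin mA → Option (Fin s) → Option (Fin s)
  B : Y → Fin mB → Fin s → Fin s
  hA : ∀ x r, Function.Involutive (A x r)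
  hB : ∀ y r, Function.Involutive (B y r)

open Classical in
/-- The protocol computes `f` with error at most `1/3`: for every input, with
probability at least `2/3` over the private coins, the walk from the tap halts
and the parity of the path length equals `f x y`. -/
noncomputable def RGHProtocol.Computes {X Y : Type} {s mA mB : ℕ}
    (P : RGHProtocol X Y s mA mB) (f : X → Y → Bool) : Prop :=
  ∀ x y,
    2 * (mA * mB) ≤
      3 * ((Finset.univ : Finset (Fin mA × Fin mB)).filter (fun r =>
        {n | ghStep (P.A x r.1) (P.B y r.2) n (ghWalk (P.A x r.1) (P.B y r.2) n)
            = ghWalk (P.A x r.1) (P.B y r.2) n}.Nonempty ∧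
        (ghLen (P.A x r.1) (P.B y r.2) % 2 = 1 ↔ f x y = true))).card

/-- The Equality function on `n`-bit inputs. -/
def EQ (n : ℕ) (x y : Fin n → Bool) : Bool := decide (x = y)

/-!
Alice's matchings live in a set of size `(s+1)^(s+1)` and Bob's in one of size `s^s`, so a
private-coin protocol is a simultaneous-message protocol whose referee follows the water.
By Hoeffding's inequality and a union bound over Bob's matchings (Newman's sampling argument),
for every `x` some list of `t = O(s log s)` samples of Alice's matching underestimates no output
probability against any matching of Bob by `1/12` or more. Such a list determines `x`: against
Bob's input `x` it cannot produce both the output `true` for `x` and `false` for `x' ≠ x` with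
frequency above `2/3 - 1/12 > 1/2`. Hence `2^n ≤ (s+1)^((s+1)t)`, that is `n = O((s log s)^2)`.
-/

open MeasureTheory ProbabilityTheory Finset

lemma integral_uniformOn_univ {α : Type*} [Fintype α] [MeasurableSpace α]
    [MeasurableSingletonClass α] (g : α → ℝ) :
    ∫ a, g a ∂uniformOn (Set.univ : Set α) = (∑ a, g a) / Fintype.card α := by
  rw [integral_fintype (Integrable.of_finite), Finset.sum_div]
  refine Finset.sum_congr rfl fun a _ => ?_
  simp [measureReal_def, uniformOn_univ, div_eq_inv_mul]

lemma card_filter_sum_ge_le_exp {α : Type*} [Fintype α] [Nonempty α] (g : α → ℝ)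
    (hg : ∀ a, g a ∈ Set.Icc 0 1) (t : ℕ) {ε : ℝ} (hε : 0 ≤ ε) :
    (#{ω : Fin t → α | ε ≤ ∑ i, g (ω i) - t * ((∑ a, g a) / Fintype.card α)} : ℝ)
      ≤ Real.exp (-2 * ε ^ 2 / t) * Fintype.card α ^ t := by
  let _ : MeasurableSpace α := ⊤
  have : DiscreteMeasurableSpace α := ⟨fun _ => trivial⟩
  set m := (∑ a, g a) / Fintype.card α with hm
  have hμ : Measure.pi (fun _ : Fin t => uniformOn (Set.univ : Set α)) = uniformOn Set.univ := by
    rw [← Set.pi_univ, uniformOn_pi]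
  set μ : Measure (Fin t → α) := Measure.pi fun _ => uniformOn Set.univ
  have hmean (i : Fin t) : μ[fun ω => g (ω i)] = m := by
    rw [hm, ← integral_uniformOn_univ, ← integral_map (measurable_pi_apply i).aemeasurable
      Measurable.of_discrete.aestronglyMeasurable, (measurePreserving_eval _ i).map_eq]
  have hsubG : ∀ i ∈ (univ : Finset (Fin t)),
      HasSubgaussianMGF (fun ω => g (ω i) - m) ((‖(1 : ℝ) - 0‖₊ / 2) ^ 2) μ :=
    fun i _ => hmean i ▸ hasSubgaussianMGF_of_mem_Icc
      (Measurable.of_discrete.comp (measurable_pi_apply i)).aemeasurable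
      (ae_of_all _ fun ω => hg (ω i))
  have hindep : iIndepFun (fun i (ω : Fin t → α) => g (ω i) - m) μ :=
    iIndepFun_pi (X := fun _ a => g a - m) fun _ => by fun_prop
  have hhoeff := HasSubgaussianMGF.measure_sum_ge_le_of_iIndepFun hindep hsubG hε
  rw [hμ, measureReal_def, uniformOn_univ, ← Finset.coe_filter_univ,
    Measure.count_apply_finset] at hhoeff
  simp only [Finset.sum_sub_distrib, sum_const, card_univ, Fintype.card_fin, nsmul_eq_mul,
    ENNReal.toReal_div, ENNReal.toReal_natCast, Fintype.card_pi, prod_const, Nat.cast_pow,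
    ENNReal.toReal_pow] at hhoeff
  rw [div_le_iff₀ (by positivity)] at hhoeff
  have hc : (((t : NNReal) * (‖(1 : ℝ) - 0‖₊ / 2) ^ 2 : NNReal) : ℝ) = t / 4 := by
    norm_num [NNReal.coe_mul]
    ring
  rw [hc] at hhoeff
  refine hhoeff.trans_eq ?_
  congr 2
  field_simp
  ring

lemma sum_ite_eq_card_sub_card_filter {ι : Type*} [Fintype ι] (q : ι → Prop) [DecidablePred q] :
    ∑ i, (if q i then 0 else 1 : ℝ) = Fintype.card ι - #{i | q i} := by
  classical
  rw [Finset.sum_ite, sum_const_zero, zero_add, sum_const, nsmul_one, Finset.filter_not,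
    card_sdiff_of_subset (filter_subset _ _), card_univ, Nat.cast_sub (card_le_univ _)]

lemma card_underestimating_samples_le_exp {α : Type*} [Fintype α] [Nonempty α] (q : α → Prop)
    [DecidablePred q] (t : ℕ) :
    (#{ω : Fin t → α | (#{i | q (ω i)} + t / 12 : ℝ) ≤ t * #{a | q a} / Fintype.card α} : ℝ)
      ≤ Real.exp (-(t / 72)) * Fintype.card α ^ t := by
  have hN : (0 : ℝ) < Fintype.card α := by positivity
  have hexp : -(t / 72 : ℝ) = -2 * (t / 12) ^ 2 / t := by
    field_simp; ring
  rw [hexp]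
  refine le_trans (Nat.cast_le.2 (card_le_card fun ω hω => ?_))
    (card_filter_sum_ge_le_exp (fun a => if q a then (0 : ℝ) else 1)
      (fun a => by split_ifs <;> simp) t (ε := t / 12) (by positivity))
  have hω' := (mem_filter.1 hω).2
  rw [mem_filter, sum_ite_eq_card_sub_card_filter (fun i => q (ω i)),
    sum_ite_eq_card_sub_card_filter, Fintype.card_fin]
  refine ⟨mem_univ _, ?_⟩
  rw [sub_div, div_self hN.ne', mul_one_sub, ← mul_div_assoc]
  linarith

lemma exists_sample_forall_card_filter_lt {α β : Type*} [Fintype α] [Nonempty α] [Fintype β]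
    (p : β → α → Prop) [∀ b, DecidablePred (p b)] (t : ℕ)
    (ht : (Fintype.card β : ℝ) < Real.exp (t / 72)) :
    ∃ ω : Fin t → α, ∀ b,
      (t * #{a | p b a} / Fintype.card α : ℝ) < #{i | p b (ω i)} + t / 12 := by
  classical
  set N := Fintype.card α
  let bad (b : β) : Finset (Fin t → α) :=
    {ω | (#{i | p b (ω i)} + t / 12 : ℝ) ≤ t * #{a | p b a} / N}
  by_contra! h
  have hcover : (univ : Finset (Fin t → α)) ⊆ univ.biUnion bad := fun ω _ => by
    obtain ⟨b, hb⟩ := h ω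
    exact mem_biUnion.2 ⟨b, mem_univ _, mem_filter.2 ⟨mem_univ _, hb⟩⟩
  have : (N : ℝ) ^ t < N ^ t := calc
    (N : ℝ) ^ t = #(univ : Finset (Fin t → α)) := by simp [N]
    _ ≤ ∑ b, (#(bad b) : ℝ) := mod_cast (card_le_card hcover).trans card_biUnion_le
    _ ≤ ∑ _b : β, Real.exp (-(t / 72)) * N ^ t :=
      sum_le_sum fun b _ => card_underestimating_samples_le_exp (p b) t
    _ = Fintype.card β * Real.exp (-(t / 72)) * N ^ t := by simp [mul_assoc]
    _ < N ^ t := by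
      refine mul_lt_of_lt_one_left (by positivity) ?_
      rwa [Real.exp_neg, ← div_eq_mul_inv, div_lt_one (Real.exp_pos _)]
  exact lt_irrefl _ this

lemma card_filter_eq_add_card_filter_eq_le {ι Z : Type*} [Fintype ι] [DecidableEq Z] (g : ι → Z)
    {z z' : Z} (h : z ≠ z') : #{i | g i = z} + #{i | g i = z'} ≤ Fintype.card ι := by
  classical
  rw [← card_union_of_disjoint (disjoint_filter.2 fun i _ h₁ h₂ => h (h₁.symm.trans h₂))]
  exact card_le_univ _

lemma card_filter_prod_eq_sum {α γ : Type*} [Fintype α] [Fintype γ] (P : α → γ → Prop)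
    [∀ a c, Decidable (P a c)] : #{r : α × γ | P r.1 r.2} = ∑ c, #{a | P a c} := by
  simp only [card_filter, Fintype.sum_prod_type_right]

section SimultaneousMessages

variable {X Y α γ M N Z : Type*} [Fintype α] [Fintype γ] [DecidableEq Z]

def SMPComputes (alice : X → α → M) (bob : Y → γ → N) (referee : M → N → Z)
    (f : X → Y → Z) : Prop :=
  ∀ x y, 2 * (Fintype.card α * Fintype.card γ)
    ≤ 3 * #{r : α × γ | referee (alice x r.1) (bob y r.2) = f x y}

def IsEmpiricalApprox {t : ℕ} (referee : M → N → Z) (μ : α → M) (w : Fin t → M) : Prop :=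
  ∀ n z, (t * #{r | referee (μ r) n = z} / Fintype.card α : ℝ)
    < #{i | referee (w i) n = z} + t / 12

/-- If `f x y ≠ f x' y`, then against Bob's input `y` the one list `w` would produce the two
outputs `f x y` and `f x' y` each with frequency above `2/3 - 1/12 > 1/2`. -/
theorem SMPComputes.eq_of_isEmpiricalApprox [Nonempty α] [Nonempty γ] {alice : X → α → M}
    {bob : Y → γ → N} {referee : M → N → Z} {f : X → Y → Z}
    (h : SMPComputes alice bob referee f) {t : ℕ} {w : Fin t → M} {x x' : X}
    (hx : IsEmpiricalApprox referee (alice x) w) (hx' : IsEmpiricalApprox referee (alice x') w) :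
    f x = f x' := by
  funext y
  by_contra hne
  have hcoin (c : γ) : (t * (#{r | referee (alice x r) (bob y c) = f x y}
      + #{r | referee (alice x' r) (bob y c) = f x' y}) / Fintype.card α : ℝ) < t + t / 6 := by
    have hdisj : (#{i | referee (w i) (bob y c) = f x y}
        + #{i | referee (w i) (bob y c) = f x' y} : ℝ) ≤ t := mod_cast
      (card_filter_eq_add_card_filter_eq_le (fun i => referee (w i) (bob y c)) hne).trans_eq
        (Fintype.card_fin t)
    rw [mul_add, add_div]
    linarith [hx (bob y c) (f x y), hx' (bob y c) (f x' y)]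
  have hsum := sum_lt_sum_of_nonempty univ_nonempty fun c _ => hcoin c
  rw [← sum_div, ← mul_sum, sum_add_distrib, ← Nat.cast_sum, ← Nat.cast_sum,
    ← card_filter_prod_eq_sum (fun r c => referee (alice x r) (bob y c) = f x y),
    ← card_filter_prod_eq_sum (fun r c => referee (alice x' r) (bob y c) = f x' y), sum_const,
    card_univ, nsmul_eq_mul, div_lt_iff₀ (by positivity)] at hsum
  have h₁ : (2 * (Fintype.card α * Fintype.card γ) : ℝ)
      ≤ 3 * #{r : α × γ | referee (alice x r.1) (bob y r.2) = f x y} := mod_cast h x y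
  have h₂ : (2 * (Fintype.card α * Fintype.card γ) : ℝ)
      ≤ 3 * #{r : α × γ | referee (alice x' r.1) (bob y r.2) = f x' y} := mod_cast h x' y
  have htγ : (0 : ℝ) ≤ t * Fintype.card γ := by positivity
  nlinarith

theorem SMPComputes.card_le_pow [Fintype X] [Fintype M] [Fintype N] [Fintype Z] [Nonempty α]
    [Nonempty γ] {alice : X → α → M} {bob : Y → γ → N} {referee : M → N → Z} {f : X → Y → Z}
    (h : SMPComputes alice bob referee f) (hf : Function.Injective f) {t : ℕ}
    (ht : (Fintype.card N * Fintype.card Z : ℝ) < Real.exp (t / 72)) :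
    Fintype.card X ≤ Fintype.card M ^ t := by
  have hsample (x : X) := exists_sample_forall_card_filter_lt (β := N × Z)
    (fun b r => referee (alice x r) b.1 = b.2) t (by simpa using ht)
  choose ω hω using hsample
  have hinj : Function.Injective fun x i => alice x (ω x i) := by
    intro x x' hxx'
    refine hf (h.eq_of_isEmpiricalApprox (fun n z => hω x (n, z)) ?_)
    simp only at hxx'
    rw [hxx']
    exact fun n z => hω x' (n, z)
  simpa using Fintype.card_le_of_injective _ hinj

end SimultaneousMessages

open Classical in
noncomputable def ghOutput {s : ℕ} (a : Option (Fin s) → Option (Fin s)) (b : Fin s → Fin s) :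
    Option Bool :=
  if {n | ghStep a b n (ghWalk a b n) = ghWalk a b n}.Nonempty then
    some (decide (ghLen a b % 2 = 1))
  else none

lemma ghOutput_eq_some_iff {s : ℕ} {a : Option (Fin s) → Option (Fin s)} {b : Fin s → Fin s}
    {v : Bool} : ghOutput a b = some v ↔ {n | ghStep a b n (ghWalk a b n) = ghWalk a b n}.Nonempty ∧
      (ghLen a b % 2 = 1 ↔ v = true) := by
  unfold ghOutput
  split_ifs with h
  · cases v <;> simp [h]
  · simp [h]

lemma RGHProtocol.Computes.smpComputes {X Y : Type} {s mA mB : ℕ} {P : RGHProtocol X Y s mA mB}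
    {f : X → Y → Bool} (h : P.Computes f) :
    SMPComputes P.A P.B ghOutput fun x y => some (f x y) := fun x y => by
  convert h x y using 3 <;> simp [Finset.ext_iff, ghOutput_eq_some_iff]

lemma injective_some_EQ (n : ℕ) : Function.Injective fun x y : Fin n → Bool => some (EQ n x y) :=
  fun x x' h => by simpa [EQ, eq_comm] using congrFun h x

theorem RGHProtocol.two_pow_le_of_computes_EQ {n s mA mB : ℕ} (hmA : 0 < mA) (hmB : 0 < mB)
    {P : RGHProtocol (Fin n → Bool) (Fin n → Bool) s mA mB} (hP : P.Computes (EQ n)) {t : ℕ}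
    (ht : (3 * s ^ s : ℝ) < Real.exp (t / 72)) : 2 ^ n ≤ (s + 1) ^ ((s + 1) * t) := by
  have := Fin.pos_iff_nonempty.1 hmA
  have := Fin.pos_iff_nonempty.1 hmB
  have hcard := hP.smpComputes.card_le_pow (injective_some_EQ n) (t := t)
    (by simpa [mul_comm] using ht)
  simpa [pow_mul] using hcard

lemma three_mul_pow_self_lt_exp (s : ℕ) :
    (3 * s ^ s : ℝ) < Real.exp ((s + 1) * (Nat.log 2 (s + 1) + 3) : ℕ) := by
  set L := Nat.log 2 (s + 1) + 1
  have hsL : s + 1 ≤ 2 ^ L := (Nat.lt_pow_succ_log_self (by norm_num) (s + 1)).le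
  have hnat : 3 * s ^ s < 2 ^ ((s + 1) * (Nat.log 2 (s + 1) + 3)) := calc
    3 * s ^ s < 4 * (2 ^ L) ^ s := by
      have hle := Nat.pow_le_pow_left (by omega : s ≤ 2 ^ L) s
      have hpos := pow_pos (Nat.two_pow_pos L) s
      omega
    _ = 2 ^ (L * s + 2) := by rw [← pow_mul, pow_add, mul_comm]; norm_num
    _ ≤ 2 ^ ((s + 1) * (Nat.log 2 (s + 1) + 3)) := Nat.pow_le_pow_right (by norm_num) (by
      simp only [L]; nlinarith)
  calc (3 * s ^ s : ℝ) < (2 : ℝ) ^ ((s + 1) * (Nat.log 2 (s + 1) + 3)) := by exact_mod_cast hnat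
    _ ≤ Real.exp 1 ^ ((s + 1) * (Nat.log 2 (s + 1) + 3)) := by
      gcongr
      linarith [Real.add_one_le_exp 1]
    _ = _ := Real.exp_one_pow _

lemma le_of_two_pow_le_pow {n s t : ℕ} (h : 2 ^ n ≤ (s + 1) ^ ((s + 1) * t)) :
    n ≤ (s + 1) * (Nat.log 2 (s + 1) + 1) * t := by
  have hsL : s + 1 ≤ 2 ^ (Nat.log 2 (s + 1) + 1) :=
    (Nat.lt_pow_succ_log_self (by norm_num) (s + 1)).le
  refine (Nat.pow_le_pow_iff_right (by norm_num : 1 < 2)).1 (h.trans ?_)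
  calc (s + 1) ^ ((s + 1) * t) ≤ (2 ^ (Nat.log 2 (s + 1) + 1)) ^ ((s + 1) * t) :=
        Nat.pow_le_pow_left hsL _
    _ = 2 ^ ((s + 1) * (Nat.log 2 (s + 1) + 1) * t) := by rw [← pow_mul]; ring_nf

/-- The private-coin randomized garden-hose complexity of Equality is
`Ω(√n / log n)`: any private-coin randomized garden-hose protocol for `EQ_n`
with `s` pipes satisfies `√n ≤ O((s + 1) · log n)`. -/
theorem RGH_private_equality_lower_bound :
    ∃ c : ℕ, 0 < c ∧
      ∀ (n s mA mB : ℕ), 0 < mA → 0 < mB →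
        ∀ P : RGHProtocol (Fin n → Bool) (Fin n → Bool) s mA mB,
          P.Computes (EQ n) →
          Nat.sqrt n ≤ c * (s + 1) * Nat.log 2 (n + 2) := by
  refine ⟨36, by norm_num, fun n s mA mB hmA hmB P hP => ?_⟩
  set K := (s + 1) * (Nat.log 2 (s + 1) + 3)
  have hpow := P.two_pow_le_of_computes_EQ hmA hmB hP (t := 72 * K) (by
    rw [Nat.cast_mul, Nat.cast_ofNat, mul_div_cancel_left₀ _ (by norm_num)]
    exact three_mul_pow_self_lt_exp s)
  have hn : n ≤ (9 * K) ^ 2 := calc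
    n ≤ (s + 1) * (Nat.log 2 (s + 1) + 1) * (72 * K) := le_of_two_pow_le_pow hpow
    _ ≤ K * (72 * K) := Nat.mul_le_mul_right _ (Nat.mul_le_mul_left _ (by omega))
    _ ≤ (9 * K) ^ 2 := by nlinarith
  have hsqrt : Nat.sqrt n ≤ 9 * K := (Nat.sqrt_le_sqrt hn).trans_eq (Nat.sqrt_eq' _)
  have hlog : 1 ≤ Nat.log 2 (n + 2) := Nat.log_pos (by norm_num) (by omega)
  rcases le_or_gt (s + 1) (n + 2) with hs | hs
  · have hK : K ≤ (s + 1) * (4 * Nat.log 2 (n + 2)) :=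
      Nat.mul_le_mul_left _ (by have := Nat.log_mono_right (b := 2) hs; omega)
    linarith
  · nlinarith [Nat.sqrt_le_self n]
end

section
/- A fraction 1 − o(1) of all Boolean functions f : {0,1}ⁿ × {0,1}ⁿ → {0,1} have garden-hose complexity GH(f) = 2^{Ω(n)}. -/
/-!
A protocol with `s` pipes is determined by the pair of matching families `(A, B)`, and it
determines the function it computes. With fewer than `S` pipes there are at most
`S ^ (1 + S * (|X| + |Y|))` such pairs, so at most that many functions have `GH f < S`
(every `f` on a finite `X` has some protocol, so `GH f` is attained). For `S = 2 ^ (n / 3)`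
and `|X| = |Y| = 2 ^ n` this is about `2 ^ (2 ^ (4n / 3))`, a vanishing fraction of all
`2 ^ (2 ^ (2n))` functions.
-/

section Walk

variable {s : ℕ} {A : Option (Fin s) → Option (Fin s)} {B : Fin s → Fin s}

lemma ghLen_eq_of_isLeast {n : ℕ}
    (h : IsLeast {m | ghStep A B m (ghWalk A B m) = ghWalk A B m} n) :
    {m | ghStep A B m (ghWalk A B m) = ghWalk A B m}.Nonempty ∧ ghLen A B = n :=
  ⟨⟨n, h.1⟩, h.csInf_eq⟩

lemma ghLen_eq_one {p : Fin s} (hA : A none = some p) (hB : B p = p) :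
    {m | ghStep A B m (ghWalk A B m) = ghWalk A B m}.Nonempty ∧ ghLen A B = 1 := by
  refine ghLen_eq_of_isLeast ⟨?_, fun m hm => ?_⟩
  · simp [ghStep, ghWalk, hA, hB]
  · by_contra! h
    obtain rfl : m = 0 := by omega
    simp [ghStep, ghWalk, hA] at hm

lemma ghLen_eq_two {p q : Fin s} (hA : A none = some p) (hB : B p = q) (hqp : q ≠ p)
    (hAq : A (some q) = some q) :
    {m | ghStep A B m (ghWalk A B m) = ghWalk A B m}.Nonempty ∧ ghLen A B = 2 := by
  refine ghLen_eq_of_isLeast ⟨?_, fun m hm => ?_⟩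
  · simp [ghStep, ghWalk, hA, hB, hAq]
  · by_contra! h
    interval_cases m <;> simp [ghStep, ghWalk, hA, hB, hqp] at hm

end Walk

lemma GHProtocol.exists_computes {X Y : Type} [Finite X] (f : X → Y → Bool) :
    ∃ s, ∃ P : GHProtocol X Y s, P.Computes f := by
  classical
  -- Pipes are `Bool × X`. Alice links the tap to `(false, x)`; Bob links `(false, x')` to
  -- `(true, x')` iff `f x' y = false`, sending the water back to Alice's open end `(true, x)`.
  let e := Finite.equivFin (Bool × X)
  let P : GHProtocol X Y (Nat.card (Bool × X)) :=
    { A := fun x => Equiv.swap none (some (e (false, x)))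
      B := fun y v => e ((e.symm v).1 ^^ !f (e.symm v).2 y, (e.symm v).2)
      hA := fun x => Equiv.swap_apply_self _ _
      hB := fun y v => by simp }
  refine ⟨_, P, fun x y => ?_⟩
  cases hf : f x y
  · have := ghLen_eq_two (A := P.A x) (B := P.B y) (p := e (false, x)) (q := e (true, x))
      (by simp [P]) (by simp [P, hf]) (by simp) (by simp [P, Equiv.swap_apply_of_ne_of_ne])
    simpa [this.2] using this.1
  · have := ghLen_eq_one (A := P.A x) (B := P.B y) (p := e (false, x))
      (by simp [P]) (by simp [P, hf])
    simpa [this.2] using this.1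

lemma GHProtocol.Computes.eq_output {X Y : Type} {s : ℕ} {P : GHProtocol X Y s}
    {f : X → Y → Bool} (hP : P.Computes f) :
    f = fun x y => decide (ghLen (P.A x) (P.B y) % 2 = 1) := by
  funext x y
  simp [(hP x y).2]

lemma exists_protocol_GH {X Y : Type} [Finite X] (f : X → Y → Bool) :
    ∃ P : GHProtocol X Y (GH f), P.Computes f :=
  Nat.sInf_mem (GHProtocol.exists_computes f)

abbrev GHWiring (X Y : Type) (s : ℕ) : Type :=
  (X → Option (Fin s) → Option (Fin s)) × (Y → Fin s → Fin s)

lemma card_GHWiring_le {X Y : Type} [Fintype X] [Fintype Y] [DecidableEq X] [DecidableEq Y]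
    {s S : ℕ} (hs : s < S) :
    Fintype.card (GHWiring X Y s) ≤ (S ^ S) ^ (Fintype.card X + Fintype.card Y) := by
  have hA : (s + 1) ^ (s + 1) ≤ S ^ S := Nat.pow_self_mono hs
  have hB : s ^ s ≤ S ^ S := Nat.pow_self_mono hs.le
  simp only [Fintype.card_prod, Fintype.card_fun, Fintype.card_option, Fintype.card_fin]
  rw [pow_add (S ^ S)]
  gcongr

lemma card_filter_GH_lt_le {X Y : Type} [Fintype X] [Fintype Y] [DecidableEq X] [DecidableEq Y]
    (S : ℕ) :
    (Finset.univ.filter fun f : X → Y → Bool => GH f < S).card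
      ≤ S ^ (1 + S * (Fintype.card X + Fintype.card Y)) := by
  let computed : (Σ s : Fin S, GHWiring X Y s) → X → Y → Bool :=
    fun ⟨_, A, B⟩ x y => decide (ghLen (A x) (B y) % 2 = 1)
  have hsub : Finset.univ.filter (fun f : X → Y → Bool => GH f < S)
      ⊆ Finset.univ.image computed := by
    intro f hf
    obtain ⟨P, hP⟩ := exists_protocol_GH f
    rw [Finset.mem_filter] at hf
    exact Finset.mem_image.2
      ⟨⟨⟨GH f, hf.2⟩, P.A, P.B⟩, Finset.mem_univ _, hP.eq_output.symm⟩
  calc _ ≤ (Finset.univ.image computed).card := Finset.card_le_card hsub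
    _ ≤ Fintype.card (Σ s : Fin S, GHWiring X Y s) := Finset.card_image_le
    _ ≤ ∑ _s : Fin S, (S ^ S) ^ (Fintype.card X + Fintype.card Y) := by
        rw [Fintype.card_sigma]
        exact Finset.sum_le_sum fun s _ => card_GHWiring_le s.isLt
    _ = S ^ (1 + S * (Fintype.card X + Fintype.card Y)) := by
        simp [pow_add, pow_mul]

lemma counting_exponent_le {n m : ℕ} (hn : 6 ≤ n) (hm : m ≤ n) :
    n / 3 * (1 + 2 ^ (n / 3) * (2 ^ n + 2 ^ n)) + m ≤ 2 ^ n * 2 ^ n := by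
  set k := n / 3
  have hpipes : k * (2 ^ k * (2 ^ n + 2 ^ n)) ≤ 2 ^ (2 * k + n + 1) :=
    calc k * (2 ^ k * (2 ^ n + 2 ^ n)) ≤ 2 ^ k * (2 ^ k * (2 ^ n + 2 ^ n)) := by
          gcongr; exact Nat.lt_two_pow_self.le
      _ = 2 ^ (2 * k + n + 1) := by ring
  have hsmall : k + m ≤ 2 ^ (2 * k + n + 1) := by
    have : n < 2 ^ n := Nat.lt_two_pow_self
    have : 2 ^ n * 2 ≤ 2 ^ (2 * k + n + 1) := by
      rw [← pow_succ]; exact Nat.pow_le_pow_right two_pos (by omega)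
    omega
  have htotal : 2 ^ (2 * k + n + 1) * 2 ≤ 2 ^ n * 2 ^ n := by
    rw [← pow_succ, ← pow_add]; exact Nat.pow_le_pow_right two_pos (by omega)
  linarith

lemma card_filter_GH_lt_mul_two_pow_le {n m : ℕ} (hn : 6 ≤ n) (hm : m ≤ n) :
    (Finset.univ.filter fun f : (Fin n → Bool) → (Fin n → Bool) → Bool =>
        GH f < 2 ^ (n / 3)).card * 2 ^ m
      ≤ Fintype.card ((Fin n → Bool) → (Fin n → Bool) → Bool) := by
  have hcount := card_filter_GH_lt_le (X := Fin n → Bool) (Y := Fin n → Bool) (2 ^ (n / 3))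
  simp only [Fintype.card_fun, Fintype.card_fin, Fintype.card_bool] at hcount ⊢
  calc _ ≤ (2 ^ (n / 3)) ^ (1 + 2 ^ (n / 3) * (2 ^ n + 2 ^ n)) * 2 ^ m := by gcongr
    _ = 2 ^ (n / 3 * (1 + 2 ^ (n / 3) * (2 ^ n + 2 ^ n)) + m) := by rw [← pow_mul, pow_add]
    _ ≤ 2 ^ (2 ^ n * 2 ^ n) := Nat.pow_le_pow_right two_pos (counting_exponent_le hn hm)
    _ = (2 ^ 2 ^ n) ^ 2 ^ n := by rw [pow_mul]

open Classical in
/-- A fraction `1 − o(1)` of all Boolean functions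
`f : {0,1}ⁿ × {0,1}ⁿ → {0,1}` have garden-hose complexity `2^{Ω(n)}`: there is
a constant `c` such that for every `ε > 0`, for all large enough `n`, the
number of functions with `GH(f) < 2^{n/c}` is at most an `ε`-fraction of all
functions. -/
theorem GH_most_functions_exponential :
    ∃ c : ℕ, 0 < c ∧
      ∀ ε : ℝ, 0 < ε → ∃ N : ℕ, ∀ n ≥ N,
        (((Finset.univ : Finset ((Fin n → Bool) → (Fin n → Bool) → Bool)).filter
            (fun f => GH f < 2 ^ (n / c))).card : ℝ)
          ≤ ε * ((Finset.univ :
              Finset ((Fin n → Bool) → (Fin n → Bool) → Bool)).card : ℝ) := by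
  refine ⟨3, three_pos, fun ε hε => ?_⟩
  obtain ⟨m, hm⟩ := exists_pow_lt_of_lt_one hε one_half_lt_one
  refine ⟨max m 6, fun n hn => ?_⟩
  have hcount :=
    card_filter_GH_lt_mul_two_pow_le (le_of_max_le_right hn) (le_of_max_le_left hn)
  rw [← Finset.card_univ] at hcount
  calc _ ≤ (1 / 2) ^ m * (Finset.univ.card : ℝ) := by
        rw [one_div_pow, one_div_mul_eq_div, le_div_iff₀ (by positivity)]
        exact_mod_cast hcount
    _ ≤ _ := by gcongr
end
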